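/- Let m ≥ 2 and let T_1,…,T_n be bounded linear operators on a complex Hilbert space H such that for every λ = (λ_1,…,λ_n) in the open unit ball 𝔹_n of ℂ^n, the operator Σ_{1≤|α|≤m−1} conj(λ_α) T_α^* + I + Σ_{1≤|α|≤m−1} λ_α T_α is positive, where for a word α = g_{i_1}⋯g_{i_k} one sets λ_α := λ_{i_1}⋯λ_{i_k} and T_α := T_{i_1}⋯T_{i_k}. Then the euclidean operator radius satisfies w_e(T_1,…,T_n) ≤ cos(π/(m+1)). -/

import Mathlib

noncomputable section

/-- For a word `α` (a list of indices), `wordProd T α = T_{i₁} ⋯ T_{i_k}`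
(with the identity for the empty word). -/
def wordProd {ι A : Type*} [Monoid A] (T : ι → A) (α : List ι) : A :=
  (α.map T).prod

/-- The euclidean operator radius of a tuple of operators:
`w_e(T) = sup_{‖h‖=1} (∑_i |⟨T_i h, h⟩|²)^{1/2}`. -/
def euclidRad {H : Type*} [NormedAddCommGroup H] [InnerProductSpace ℂ H]
    {ι : Type*} [Fintype ι] (T : ι → H →L[ℂ] H) : ℝ :=
  sSup {x : ℝ | ∃ h : H, ‖h‖ = 1 ∧
    x = Real.sqrt (∑ j : ι, ‖(inner ℂ ((T j) h) h : ℂ)‖ ^ 2)}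

open Complex Finset ContinuousLinearMap
open scoped InnerProductSpace


lemma exp_sum_eq_zero (N : ℕ) (hN : 0 < N) (s : ℤ) (hs : ¬ ((N:ℤ) ∣ s)) :
    ∑ j ∈ Finset.range N, Complex.exp ((2*(j:ℂ)+1) * s * Real.pi * Complex.I / N) = 0 := by
  have hNC : (N:ℂ) ≠ 0 := by exact_mod_cast hN.ne'
  have hπ : (Real.pi : ℂ) ≠ 0 := by exact_mod_cast Real.pi_ne_zero
  have hI : Complex.I ≠ 0 := Complex.I_ne_zero
  set x : ℂ := Complex.exp (2 * s * Real.pi * Complex.I / N) with hx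
  have hterm : ∀ j ∈ Finset.range N, Complex.exp ((2*(j:ℂ)+1) * s * Real.pi * Complex.I / N)
      = Complex.exp ((s:ℂ) * Real.pi * Complex.I / N) * x ^ j := by
    intro j _
    rw [hx, ← Complex.exp_nat_mul, ← Complex.exp_add]
    congr 1
    field_simp
    ring
  rw [Finset.sum_congr rfl hterm, ← Finset.mul_sum]
  have hx1 : x ≠ 1 := by
    intro h
    rw [hx, Complex.exp_eq_one_iff] at h
    obtain ⟨n, hn⟩ := h
    apply hs
    refine ⟨n, ?_⟩
    -- s = N * n
    have h2 : (2 * Real.pi * Complex.I : ℂ) ≠ 0 := by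
      intro h0
      simp [mul_eq_zero, hπ, hI] at h0
    have hs' : (s : ℂ) = (N : ℂ) * n := by
      apply mul_left_cancel₀ h2
      have hn' : 2 * (s:ℂ) * Real.pi * Complex.I = (n:ℂ) * (2 * Real.pi * Complex.I) * N := by
        field_simp at hn
        linear_combination (2 * Real.pi * Complex.I) * hn
      linear_combination hn'
    exact_mod_cast hs'
  have hxN : x ^ N = 1 := by
    rw [hx, ← Complex.exp_nat_mul]
    have : (N:ℂ) * (2 * s * Real.pi * Complex.I / N) = s * (2 * Real.pi * Complex.I) := by
      field_simp
    rw [this, Complex.exp_int_mul_two_pi_mul_I]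
  rw [geom_sum_eq hx1, hxN]
  simp

lemma not_dvd_of_lt (N : ℕ) (s : ℤ) (h1 : s ≠ 0) (h2 : s.natAbs < N) : ¬ ((N:ℤ) ∣ s) := by
  intro hd
  exact h1 (Int.eq_zero_of_dvd_of_natAbs_lt_natAbs hd (by simpa using h2))

lemma exp_sum_zero (N : ℕ) :
    ∑ j ∈ Finset.range N, Complex.exp ((2*(j:ℂ)+1) * ((0:ℤ):ℂ) * Real.pi * Complex.I / N) = N := by
  simp

lemma key_sum (N : ℕ) (hN : 3 ≤ N) (k : ℕ) (hk2 : k ≤ N - 2) :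
    ∑ j ∈ Finset.range N,
      ((2/(N:ℝ) * (Real.cos (Real.pi/N) - Real.cos ((2*(j:ℝ)+1)*Real.pi/N)) : ℝ) : ℂ)
        * Complex.exp ((2*(j:ℂ)+1) * (((-(k:ℤ)):ℤ):ℂ) * Real.pi * Complex.I / N)
    = if k = 0 then 2 * (Real.cos (Real.pi/N) : ℂ) else if k = 1 then -1 else 0 := by
  have hN0 : 0 < N := by omega
  have hNC : (N:ℂ) ≠ 0 := by exact_mod_cast hN0.ne'
  set F : ℕ → ℤ → ℂ := fun j s => Complex.exp ((2*(j:ℂ)+1) * ((s:ℤ):ℂ) * Real.pi * Complex.I / N) with hF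
  have hmul : ∀ (j:ℕ) (a b : ℤ), F j a * F j b = F j (a+b) := by
    intro j a b
    rw [hF, ← Complex.exp_add]
    congr 1
    push_cast
    ring
  have hcos : ∀ j : ℕ, ((Real.cos ((2*(j:ℝ)+1)*Real.pi/N) : ℝ) : ℂ) = (F j 1 + F j (-1))/2 := by
    intro j
    rw [Complex.ofReal_cos, Complex.cos]
    rw [hF]
    push_cast
    ring_nf
  have hterm : ∀ j ∈ Finset.range N,
      ((2/(N:ℝ) * (Real.cos (Real.pi/N) - Real.cos ((2*(j:ℝ)+1)*Real.pi/N)) : ℝ) : ℂ)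
        * F j (-(k:ℤ))
      = (2 * (Real.cos (Real.pi/N) : ℂ)/N) * F j (-(k:ℤ))
        - (1/(N:ℂ)) * F j (1 + -(k:ℤ)) - (1/(N:ℂ)) * F j (-1 + -(k:ℤ)) := by
    intro j _
    rw [← hmul j 1 (-(k:ℤ)), ← hmul j (-1) (-(k:ℤ))]
    push_cast [hcos j]
    ring
  rw [Finset.sum_congr rfl hterm]
  rw [Finset.sum_sub_distrib, Finset.sum_sub_distrib, ← Finset.mul_sum, ← Finset.mul_sum,
    ← Finset.mul_sum]
  rcases Nat.eq_zero_or_pos k with hk0 | hk0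
  · subst hk0
    simp only [Nat.cast_zero, neg_zero, add_zero]
    rw [exp_sum_zero]
    rw [exp_sum_eq_zero N hN0 1 (not_dvd_of_lt N 1 (by omega) (by omega)),
      exp_sum_eq_zero N hN0 (-1) (not_dvd_of_lt N (-1) (by omega) (by omega))]
    field_simp
    rw [if_pos trivial]
    ring
  · rcases eq_or_ne k 1 with hk1 | hk1
    · subst hk1
      rw [show ((1:ℤ) + -(1:ℕ) : ℤ) = 0 by norm_num]
      rw [exp_sum_zero]
      rw [exp_sum_eq_zero N hN0 (-(1:ℕ)) (not_dvd_of_lt N _ (by omega) (by omega)),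
        exp_sum_eq_zero N hN0 (-1 + -(1:ℕ)) (not_dvd_of_lt N _ (by omega) (by omega))]
      simp only [if_neg (by norm_num : ¬ (1:ℕ) = 0), if_pos rfl]
      field_simp
      rw [if_pos trivial]
      ring
    · have h2k : 2 ≤ k := by omega
      rw [exp_sum_eq_zero N hN0 (-(k:ℤ)) (not_dvd_of_lt N _ (by omega) (by omega)),
        exp_sum_eq_zero N hN0 (1 + -(k:ℤ)) (not_dvd_of_lt N _ (by omega) (by omega)),
        exp_sum_eq_zero N hN0 (-1 + -(k:ℤ)) (not_dvd_of_lt N _ (by omega) (by omega))]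
      rw [if_neg (by omega), if_neg hk1]
      ring

/-- weights -/
noncomputable def wq (N j : ℕ) : ℝ := 2/(N:ℝ) * (Real.cos (Real.pi/N) - Real.cos ((2*(j:ℝ)+1)*Real.pi/N))

/-- points -/
noncomputable def zq (N j : ℕ) : ℂ := Complex.exp ((2*(j:ℂ)+1) * Real.pi * Complex.I / N)

lemma zq_norm (N j : ℕ) : ‖zq N j‖ = 1 := by
  have : zq N j = Complex.exp (((2*(j:ℝ)+1) * Real.pi / N : ℝ) * Complex.I) := by
    unfold zq; congr 1; push_cast; ring
  rw [this, Complex.norm_exp_ofReal_mul_I]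

lemma zq_conj_pow (N j k : ℕ) : (starRingEnd ℂ (zq N j))^k
    = Complex.exp ((2*(j:ℂ)+1) * (((-(k:ℤ)):ℤ):ℂ) * Real.pi * Complex.I / N) := by
  have h1 : starRingEnd ℂ (zq N j)
      = Complex.exp (-((2*(j:ℂ)+1) * Real.pi * Complex.I / N)) := by
    unfold zq
    rw [← Complex.exp_conj]
    congr 1
    simp only [map_div₀, map_mul, map_add, map_one, map_ofNat, Complex.conj_natCast,
      Complex.conj_ofReal, Complex.conj_I]
    ring
  rw [h1, ← Complex.exp_nat_mul]
  congr 1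
  push_cast
  ring

lemma wq_nonneg (N j : ℕ) (hN : 3 ≤ N) (hj : j < N) : 0 ≤ wq N j := by
  unfold wq
  have hπpos := Real.pi_pos
  have hNRpos : (0:ℝ) < N := by positivity
  have h1 : Real.pi / N ≤ (2*(j:ℝ)+1) * Real.pi / N := by
    apply div_le_div_of_nonneg_right ?_ hNRpos.le
    nlinarith [show (0:ℝ) ≤ (j:ℝ) from Nat.cast_nonneg j]
  have h2 : (2*(j:ℝ)+1) * Real.pi / N ≤ 2 * Real.pi - Real.pi / N := by
    have hj' : (j:ℝ) ≤ (N:ℝ) - 1 := by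
      have : (j:ℝ) + 1 ≤ (N:ℝ) := by exact_mod_cast hj
      linarith
    rw [div_le_iff₀ hNRpos, sub_mul, div_mul_cancel₀ _ hNRpos.ne']
    nlinarith
  rcases le_or_gt ((2*(j:ℝ)+1) * Real.pi / N) Real.pi with hcase | hcase
  · have := Real.cos_le_cos_of_nonneg_of_le_pi (by positivity) hcase h1
    apply mul_nonneg (by positivity)
    linarith
  · have heq : Real.cos ((2*(j:ℝ)+1) * Real.pi / N)
        = Real.cos (2 * Real.pi - ((2*(j:ℝ)+1) * Real.pi / N)) := by
      rw [Real.cos_two_pi_sub]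
  -- π/N ≤ 2π - θ ≤ π
    have h3 : Real.pi / N ≤ 2 * Real.pi - ((2*(j:ℝ)+1) * Real.pi / N) := by linarith
    have := Real.cos_le_cos_of_nonneg_of_le_pi (by positivity)
      (by linarith : 2 * Real.pi - ((2*(j:ℝ)+1) * Real.pi / N) ≤ Real.pi) h3
    rw [← heq] at this
    apply mul_nonneg (by positivity)
    linarith

lemma key_sum' (N : ℕ) (hN : 3 ≤ N) (k : ℕ) (hk2 : k ≤ N - 2) :
    ∑ j ∈ Finset.range N, ((wq N j : ℝ) : ℂ) * (starRingEnd ℂ (zq N j))^k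
    = if k = 0 then 2 * (Real.cos (Real.pi/N) : ℂ) else if k = 1 then -1 else 0 := by
  rw [← key_sum N hN k hk2]
  apply Finset.sum_congr rfl
  intro j _
  rw [zq_conj_pow]
  rfl

lemma sum_wq (N : ℕ) (hN : 3 ≤ N) :
    ∑ j ∈ Finset.range N, wq N j = 2 * Real.cos (Real.pi/N) := by
  have h0 := key_sum' N hN 0 (by omega)
  norm_num at h0
  rw [← Complex.ofReal_sum] at h0
  exact_mod_cast h0

lemma quad (N : ℕ) (hN : 3 ≤ N) (c : ℕ → ℂ) (t : ℝ) (ht0 : 0 ≤ t) (ht1 : t < 1)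
    (hineq : ∀ z : ℂ, ‖z‖ < 1 →
      0 ≤ 1 + 2 * (∑ k ∈ Finset.Icc 1 (N-2), (starRingEnd ℂ z)^k * c k).re) :
    t * (c 1).re ≤ Real.cos (Real.pi/N) := by
  have hterm : ∀ j, j < N → 0 ≤ 1 + 2 * (∑ k ∈ Finset.Icc 1 (N-2),
      (starRingEnd ℂ ((t:ℂ) * zq N j))^k * c k).re := by
    intro j hj
    apply hineq
    rw [norm_mul, zq_norm, mul_one, Complex.norm_real]
    rwa [Real.norm_of_nonneg ht0]
  have hpos_tot : 0 ≤ ∑ j ∈ Finset.range N, wq N j * (1 + 2 * (∑ k ∈ Finset.Icc 1 (N-2),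
      (starRingEnd ℂ ((t:ℂ) * zq N j))^k * c k).re) := by
    apply Finset.sum_nonneg
    intro j hj
    exact mul_nonneg (wq_nonneg N j hN (Finset.mem_range.mp hj))
      (hterm j (Finset.mem_range.mp hj))
  have hswap : ∑ j ∈ Finset.range N, ((wq N j : ℝ) : ℂ) * ∑ k ∈ Finset.Icc 1 (N-2),
      (starRingEnd ℂ ((t:ℂ) * zq N j))^k * c k = -(t:ℂ) * c 1 := by
    have step1 : ∀ j, ((wq N j : ℝ) : ℂ) * ∑ k ∈ Finset.Icc 1 (N-2),
        (starRingEnd ℂ ((t:ℂ) * zq N j))^k * c k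
        = ∑ k ∈ Finset.Icc 1 (N-2),
          (((wq N j : ℝ) : ℂ) * (starRingEnd ℂ (zq N j))^k) * ((t:ℂ)^k * c k) := by
      intro j
      rw [Finset.mul_sum]
      apply Finset.sum_congr rfl
      intro k _
      rw [map_mul, mul_pow, Complex.conj_ofReal]
      ring
    calc ∑ j ∈ Finset.range N, ((wq N j : ℝ) : ℂ) * ∑ k ∈ Finset.Icc 1 (N-2),
          (starRingEnd ℂ ((t:ℂ) * zq N j))^k * c k
        = ∑ k ∈ Finset.Icc 1 (N-2), (∑ j ∈ Finset.range N,
            ((wq N j : ℝ) : ℂ) * (starRingEnd ℂ (zq N j))^k) * ((t:ℂ)^k * c k) := by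
          rw [Finset.sum_congr rfl (fun j _ => step1 j), Finset.sum_comm]
          apply Finset.sum_congr rfl
          intro k _
          rw [Finset.sum_mul]
      _ = ∑ k ∈ Finset.Icc 1 (N-2), (if k = 1 then (-1:ℂ) else 0) * ((t:ℂ)^k * c k) := by
          apply Finset.sum_congr rfl
          intro k hk
          rw [Finset.mem_Icc] at hk
          rw [key_sum' N hN k hk.2, if_neg (by omega)]
      _ = -(t:ℂ) * c 1 := by
          rw [Finset.sum_eq_single 1 (fun k _ hk1 => by rw [if_neg hk1, zero_mul])
            (fun h1 => absurd (Finset.mem_Icc.mpr ⟨le_refl 1, by omega⟩) h1)]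
          simp
  have hre : ∑ j ∈ Finset.range N, wq N j * (1 + 2 * (∑ k ∈ Finset.Icc 1 (N-2),
      (starRingEnd ℂ ((t:ℂ) * zq N j))^k * c k).re)
      = 2 * Real.cos (Real.pi/N) - 2 * (t * (c 1).re) := by
    have : ∀ j, wq N j * (1 + 2 * (∑ k ∈ Finset.Icc 1 (N-2),
        (starRingEnd ℂ ((t:ℂ) * zq N j))^k * c k).re)
        = wq N j + 2 * (((wq N j : ℝ) : ℂ) * ∑ k ∈ Finset.Icc 1 (N-2),
          (starRingEnd ℂ ((t:ℂ) * zq N j))^k * c k).re := by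
      intro j
      rw [Complex.re_ofReal_mul]
      ring
    rw [Finset.sum_congr rfl (fun j _ => this j), Finset.sum_add_distrib, sum_wq N hN,
      ← Finset.mul_sum, ← Complex.re_sum, hswap]
    have : (-(t:ℂ) * c 1).re = -(t * (c 1).re) := by
      rw [neg_mul, Complex.neg_re, Complex.re_ofReal_mul]
    rw [this]
    ring
  rw [hre] at hpos_tot
  linarith

lemma scalar_key {m : ℕ} (hm : 2 ≤ m) (c : ℕ → ℂ) (r : ℝ) (hr : 0 ≤ r) (hc1 : c 1 = r)
    (hineq : ∀ z : ℂ, ‖z‖ < 1 →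
      0 ≤ 1 + 2 * (∑ k ∈ Finset.Icc 1 (m-1), (starRingEnd ℂ z)^k * c k).re) :
    r ≤ Real.cos (Real.pi / ((m:ℝ)+1)) := by
  have hN : 3 ≤ m + 1 := by omega
  have hNR : ((m:ℝ) + 1) = ((m+1 : ℕ):ℝ) := by push_cast; ring
  rw [hNR]
  have hIcc : Finset.Icc 1 (m-1) = Finset.Icc 1 ((m+1)-2) := by congr 1
  have hc1re : (c 1).re = r := by rw [hc1, Complex.ofReal_re]
  have hmain : ∀ t : ℝ, 0 ≤ t → t < 1 → t * r ≤ Real.cos (Real.pi/((m+1:ℕ):ℝ)) := by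
    intro t ht0 ht1
    rw [← hc1re]
    apply quad (m+1) hN c t ht0 ht1
    intro z hz
    have := hineq z hz
    rwa [hIcc] at this
  have hco_pos : 0 < Real.cos (Real.pi/((m+1:ℕ):ℝ)) := by
    apply Real.cos_pos_of_mem_Ioo
    have hπpos := Real.pi_pos
    have h3 : (3:ℝ) ≤ ((m+1:ℕ):ℝ) := by exact_mod_cast hN
    constructor
    · have : 0 < Real.pi / ((m+1:ℕ):ℝ) := by positivity
      linarith
    · rw [div_lt_div_iff₀ (by linarith) (by norm_num : (0:ℝ) < 2)]
      nlinarith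
  by_contra hlt
  push_neg at hlt
  have hrpos : 0 < r := lt_trans hco_pos hlt
  have h1 : Real.cos (Real.pi/((m+1:ℕ):ℝ)) / r < 1 := (div_lt_one hrpos).mpr hlt
  have h2 : (0:ℝ) ≤ (Real.cos (Real.pi/((m+1:ℕ):ℝ)) / r + 1) / 2 := by positivity
  have h3 : (Real.cos (Real.pi/((m+1:ℕ):ℝ)) / r + 1) / 2 < 1 := by linarith
  have h4 := hmain _ h2 h3
  have h5 : (Real.cos (Real.pi/((m+1:ℕ):ℝ)) / r + 1) / 2 * r
      = (Real.cos (Real.pi/((m+1:ℕ):ℝ)) + r) / 2 := by field_simp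
  rw [h5] at h4
  linarith

lemma cos_pos_aux (m : ℕ) (hm : 2 ≤ m) : 0 < Real.cos (Real.pi / ((m:ℝ)+1)) := by
  have hπpos := Real.pi_pos
  have h3 : (3:ℝ) ≤ (m:ℝ)+1 := by
    have : (2:ℝ) ≤ (m:ℝ) := by exact_mod_cast hm
    linarith
  apply Real.cos_pos_of_mem_Ioo
  constructor
  · have : 0 < Real.pi / ((m:ℝ)+1) := by positivity
    linarith
  · rw [div_lt_div_iff₀ (by linarith) (by norm_num : (0:ℝ) < 2)]
    nlinarith

/-- If for every `λ` in the open unit ball of `ℂⁿ` the operator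
`∑_{1 ≤ |α| ≤ m-1} conj(λ_α) T_α^* + I + ∑_{1 ≤ |α| ≤ m-1} λ_α T_α`
is positive, then `w_e(T_1,…,T_n) ≤ cos (π/(m+1))`. -/
theorem euclidean_radius_le_cos_of_positive {H : Type*} [NormedAddCommGroup H]
    [InnerProductSpace ℂ H] [CompleteSpace H] {n m : ℕ} (hm : 2 ≤ m)
    (T : Fin n → H →L[ℂ] H)
    (hpos : ∀ l : Fin n → ℂ, (∑ i, ‖l i‖ ^ 2) < 1 →
      (∑ k ∈ Finset.Icc 1 (m - 1), ∑ α : Fin k → Fin n,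
          (starRingEnd ℂ (∏ j, l (α j))) •
            ContinuousLinearMap.adjoint (wordProd T (List.ofFn α))
        + 1
        + ∑ k ∈ Finset.Icc 1 (m - 1), ∑ α : Fin k → Fin n,
            (∏ j, l (α j)) • wordProd T (List.ofFn α)).IsPositive) :
    euclidRad T ≤ Real.cos (Real.pi / ((m : ℝ) + 1)) := by
  apply Real.sSup_le _ (cos_pos_aux m hm).le
  rintro x ⟨h, hh, rfl⟩
  -- general scalar consequence of positivity
  have hscalar : ∀ l : Fin n → ℂ, (∑ i, ‖l i‖ ^ 2) < 1 →
      0 ≤ 1 + 2 * (∑ k ∈ Finset.Icc 1 (m - 1), ∑ α : Fin k → Fin n,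
        (starRingEnd ℂ (∏ j, l (α j))) *
          (inner ℂ ((wordProd T (List.ofFn α)) h) h : ℂ)).re := by
    intro l hl
    have hp := (hpos l hl).2 h
    rw [ContinuousLinearMap.reApplyInnerSelf_apply] at hp
    -- compute the inner product
    have hY : (inner ℂ ((∑ k ∈ Finset.Icc 1 (m - 1), ∑ α : Fin k → Fin n,
        (∏ j, l (α j)) • wordProd T (List.ofFn α)) h) h : ℂ)
        = ∑ k ∈ Finset.Icc 1 (m - 1), ∑ α : Fin k → Fin n,
          (starRingEnd ℂ (∏ j, l (α j))) *
            (inner ℂ ((wordProd T (List.ofFn α)) h) h : ℂ) := by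
      rw [ContinuousLinearMap.sum_apply, sum_inner]
      apply Finset.sum_congr rfl
      intro k _
      rw [ContinuousLinearMap.sum_apply, sum_inner]
      apply Finset.sum_congr rfl
      intro α _
      rw [ContinuousLinearMap.smul_apply, inner_smul_left]
    have hX : (inner ℂ ((∑ k ∈ Finset.Icc 1 (m - 1), ∑ α : Fin k → Fin n,
        (starRingEnd ℂ (∏ j, l (α j))) •
          ContinuousLinearMap.adjoint (wordProd T (List.ofFn α))) h) h : ℂ)
        = starRingEnd ℂ (∑ k ∈ Finset.Icc 1 (m - 1), ∑ α : Fin k → Fin n,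
          (starRingEnd ℂ (∏ j, l (α j))) *
            (inner ℂ ((wordProd T (List.ofFn α)) h) h : ℂ)) := by
      rw [map_sum, ContinuousLinearMap.sum_apply, sum_inner]
      apply Finset.sum_congr rfl
      intro k _
      rw [map_sum, ContinuousLinearMap.sum_apply, sum_inner]
      apply Finset.sum_congr rfl
      intro α _
      rw [ContinuousLinearMap.smul_apply, inner_smul_left,
        ContinuousLinearMap.adjoint_inner_left, map_mul, Complex.conj_conj,
        ← inner_conj_symm]
    rw [ContinuousLinearMap.add_apply, ContinuousLinearMap.add_apply,
      ContinuousLinearMap.one_apply, inner_add_left, inner_add_left, hY, hX,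
      inner_self_eq_norm_sq_to_K, hh] at hp
    simp only [RCLike.re_to_complex, Complex.add_re, Complex.conj_re,
      Complex.ofReal_one, RCLike.ofReal_one, one_pow, Complex.one_re] at hp
    linarith
  -- now the scalar key
  rcases eq_or_ne (Real.sqrt (∑ j, ‖(inner ℂ ((T j) h) h : ℂ)‖ ^ 2)) 0 with hzero | hnz
  · rw [hzero]; exact (cos_pos_aux m hm).le
  · have hsumnn : 0 ≤ ∑ j, ‖(inner ℂ ((T j) h) h : ℂ)‖ ^ 2 :=
      Finset.sum_nonneg fun j _ => sq_nonneg _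
    have hrpos : 0 < Real.sqrt (∑ j, ‖(inner ℂ ((T j) h) h : ℂ)‖ ^ 2) :=
      lt_of_le_of_ne (Real.sqrt_nonneg _) (Ne.symm hnz)
    -- abbreviations
    obtain ⟨r, hrdef, hr0⟩ : ∃ r : ℝ, Real.sqrt (∑ j, ‖(inner ℂ ((T j) h) h : ℂ)‖ ^ 2) = r
        ∧ 0 < r := ⟨_, rfl, hrpos⟩
    rw [hrdef]
    have hrsq : r ^ 2 = ∑ j, ‖(inner ℂ ((T j) h) h : ℂ)‖ ^ 2 := by
      rw [← hrdef, Real.sq_sqrt hsumnn]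
    set b : Fin n → ℂ := fun i => (inner ℂ ((T i) h) h : ℂ) with hb
    set μ : Fin n → ℂ := fun i => b i / (r:ℂ) with hμ
    have hμsum : ∑ i, ‖μ i‖ ^ 2 = 1 := by
      rw [hμ]
      simp only [norm_div, Complex.norm_real, Real.norm_of_nonneg hr0.le, div_pow]
      rw [← Finset.sum_div, ← hrsq]
      field_simp
    set c : ℕ → ℂ := fun k => ∑ α : Fin k → Fin n,
      (starRingEnd ℂ (∏ j, μ (α j))) *
        (inner ℂ ((wordProd T (List.ofFn α)) h) h : ℂ) with hc
    have hc1 : c 1 = (r : ℂ) := by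
      have e1 : ∀ α : Fin 1 → Fin n, (starRingEnd ℂ (∏ j, μ (α j))) *
          (inner ℂ ((wordProd T (List.ofFn α)) h) h : ℂ)
          = starRingEnd ℂ (μ (α 0)) * b (α 0) := by
        intro α
        have h1 : (∏ j, μ (α j)) = μ (α 0) := Fin.prod_univ_one _
        have h2 : wordProd T (List.ofFn α) = T (α 0) := by
          simp [wordProd, List.ofFn_succ]
        rw [h1, h2]
      have e2 : ∀ i : Fin n, starRingEnd ℂ (μ i) * b i = ((‖b i‖^2 : ℝ) : ℂ) / (r:ℂ) := by
        intro i
        simp only [hμ]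
        rw [map_div₀, Complex.conj_ofReal, div_mul_eq_mul_div, mul_comm, Complex.mul_conj]
        congr 1
        rw [Complex.sq_norm]
      calc c 1 = ∑ α : Fin 1 → Fin n, starRingEnd ℂ (μ (α 0)) * b (α 0) := by
            simp only [hc]
            exact Finset.sum_congr rfl (fun α _ => e1 α)
        _ = ∑ i : Fin n, starRingEnd ℂ (μ i) * b i :=
            Fintype.sum_equiv (Equiv.funUnique (Fin 1) (Fin n)) _ _ (fun α => rfl)
        _ = ∑ i : Fin n, ((‖b i‖^2 : ℝ) : ℂ) / (r:ℂ) := Finset.sum_congr rfl (fun i _ => e2 i)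
        _ = (r:ℂ) := by
            rw [← Finset.sum_div, ← Complex.ofReal_sum, ← hrsq]
            push_cast
            have hrC : (r:ℂ) ≠ 0 := by exact_mod_cast hr0.ne'
            rw [pow_two, mul_div_assoc, div_self hrC, mul_one]
    apply scalar_key hm c r hr0.le hc1
    intro z hz
    have hl : (∑ i, ‖z * μ i‖ ^ 2) < 1 := by
      simp only [norm_mul, mul_pow]
      rw [← Finset.mul_sum, hμsum, mul_one]
      exact pow_lt_one₀ (norm_nonneg z) hz (by norm_num)
    have := hscalar (fun i => z * μ i) hl
    have hSeq : (∑ k ∈ Finset.Icc 1 (m - 1), ∑ α : Fin k → Fin n,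
        (starRingEnd ℂ (∏ j, z * μ (α j))) *
          (inner ℂ ((wordProd T (List.ofFn α)) h) h : ℂ))
        = ∑ k ∈ Finset.Icc 1 (m-1), (starRingEnd ℂ z)^k * c k := by
      apply Finset.sum_congr rfl
      intro k _
      simp only [hc]
      rw [Finset.mul_sum]
      apply Finset.sum_congr rfl
      intro α _
      rw [Finset.prod_mul_distrib, Finset.prod_const, Finset.card_univ, Fintype.card_fin,
        map_mul, map_pow]
      ring
    rwa [hSeq] at this
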